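/- Let A be a commutative unital ring of characteristic 0 and n ≥ 4. Let (a_1,...,a_n) = (1, n-2, 1, 2, ..., 2) (entries n·1_A - 2_A etc., with n-3 trailing 2's). Suppose 3 ≤ k ≤ n-1 and (b_1,...,b_k) is a λ-quiddity on A (i.e. M_k(b_1,...,b_k) = ±Id) such that some dihedral rearrangement of (a_1,...,a_n) equals (c_1,...,c_{n+2-k}) ⊕ (b_1,...,b_k) for some tuple (c_1,...,c_{n+2-k}). Then (b_1,...,b_k) = (k_A-2_A, 1_A, 2_A, ..., 2_A, 1_A) or (b_1,...,b_k) = (1_A, 2_A, ..., 2_A, 1_A, k_A-2_A) (with k-4 middle 2's, possibly zero of them). -/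
import Mathlib


open Matrix

/-- `Mlist [a₁,…,aₙ] = M(aₙ)⋯M(a₁)` where `M(a) = [[a,-1],[1,0]]`. -/
def Mlist {A : Type*} [CommRing A] (l : List A) : Matrix (Fin 2) (Fin 2) A :=
  ((l.map (fun a => !![a, -1; 1, 0])).reverse).prod

/-- The continuant `K` (tridiagonal determinant), with `K [] = 1`. -/
def cont {A : Type*} [CommRing A] : List A → A
  | [] => 1
  | [a] => a
  | a :: b :: l => a * cont (b :: l) - cont l

/-- `(a₁,…,aₙ) ⊕ (b₁,…,bₘ) = (a₁+bₘ, a₂,…,aₙ₋₁, aₙ+b₁, b₂,…,bₘ₋₁)` (for lists of length ≥ 2). -/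
def oplus {A : Type*} [CommRing A] (la lb : List A) : List A :=
  match la, lb with
  | a1 :: ta, b1 :: tb =>
      (a1 + tb.getLastD b1) :: (ta.dropLast ++ ((ta.getLastD a1 + b1) :: tb.dropLast))
  | _, _ => []

section Aux

variable {A : Type*} [CommRing A]

lemma Mlist_cons' (x : A) (l : List A) : Mlist (x :: l) = Mlist l * !![x,-1;1,0] := by
  simp [Mlist]

lemma Mlist_append' (l1 l2 : List A) : Mlist (l1 ++ l2) = Mlist l2 * Mlist l1 := by
  simp [Mlist]

lemma Mlist_replicate' (t : ℕ) :
    Mlist (List.replicate t (2:A)) = !![(t:A)+1, -(t:A); (t:A), 1-(t:A)] := by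
  induction t with
  | zero => simp [Mlist]; ext i j; fin_cases i <;> fin_cases j <;> simp
  | succ m ih =>
    rw [List.replicate_succ, Mlist_cons', ih]
    ext i j
    fin_cases i <;> fin_cases j <;> simp [Matrix.mul_apply, Fin.sum_univ_two] <;> ring

lemma M_D1' (t : ℕ) : Mlist ((1:A) :: List.replicate t (2:A)) = !![1, -(t:A)-1; 1, -(t:A)] := by
  rw [Mlist_cons', Mlist_replicate']
  ext i j; fin_cases i <;> fin_cases j <;> simp [Matrix.mul_apply, Fin.sum_univ_two] <;> ring

lemma M_D2' (t : ℕ) : Mlist (List.replicate t (2:A) ++ [(1:A)]) = !![1, -1; (t:A)+1, -(t:A)] := by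
  rw [Mlist_append', Mlist_cons', Mlist_replicate']
  show (Mlist [] * _) * _ = _
  rw [show Mlist ([] : List A) = 1 from rfl]
  ext i j; fin_cases i <;> fin_cases j <;> simp [Matrix.mul_apply, Fin.sum_univ_two] <;> ring

lemma M_D4' (x : A) (t : ℕ) : Mlist (x :: (1:A) :: List.replicate t (2:A)) =
    !![x - t - 1, -1; x - t, -1] := by
  rw [Mlist_cons', Mlist_cons', Mlist_replicate']
  ext i j; fin_cases i <;> fin_cases j <;> simp [Matrix.mul_apply, Fin.sum_univ_two] <;> ring

lemma M_D5' (x : A) : Mlist [x] = !![x, -1; 1, 0] := by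
  rw [show [x] = x :: ([]:List A) from rfl, Mlist_cons',
    show Mlist ([] : List A) = 1 from rfl, one_mul]

lemma M_D6' (x : A) (t : ℕ) : Mlist (List.replicate t (2:A) ++ [(1:A), x]) =
    !![x - t - 1, (t:A) - x; 1, -1] := by
  rw [Mlist_append', Mlist_cons', Mlist_cons', show Mlist ([] : List A) = 1 from rfl,
    one_mul, Mlist_replicate']
  ext i j; fin_cases i <;> fin_cases j <;> simp [Matrix.mul_apply, Fin.sum_univ_two] <;> ring

lemma M_D7' (x : A) (t u : ℕ) :
    Mlist (List.replicate t (2:A) ++ (1:A) :: x :: (1:A) :: List.replicate u (2:A)) 0 0 =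
    x - (u:A) - 2 - (t:A) := by
  rw [Mlist_append', Mlist_cons', M_D4', Mlist_replicate']
  simp [Matrix.mul_apply, Fin.sum_univ_two]
  ring

lemma quid_core' (b1 bk : A) (w : List A)
    (hq : Mlist (b1 :: (w ++ [bk])) = 1 ∨ Mlist (b1 :: (w ++ [bk])) = -1) :
    (Mlist w 0 0 = 1 ∨ Mlist w 0 0 = -1) ∧
      b1 = -(Mlist w 0 0 * Mlist w 0 1) ∧ bk = Mlist w 0 0 * Mlist w 1 0 := by
  set p := Mlist w 0 0
  set q := Mlist w 0 1
  set r := Mlist w 1 0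
  set s := Mlist w 1 1
  have hw : Mlist w = !![p, q; r, s] := by
    rw [Matrix.eta_fin_two (Mlist w)]
  have key : Mlist (b1 :: (w ++ [bk])) =
      !![(bk*p - r)*b1 + (bk*q - s), -(bk*p - r); p*b1 + q, -p] := by
    rw [Mlist_cons', Mlist_append', hw]
    show !![bk,-1;1,0] * Mlist [] * _ * _ = _
    rw [show Mlist ([] : List A) = 1 from rfl]
    ext i j
    fin_cases i <;> fin_cases j <;>
      simp [Matrix.mul_apply, Fin.sum_univ_two] <;> ring
  rcases hq with hq | hq <;> rw [key] at hq
  · have h01 := congrFun (congrFun hq 0) 1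
    have h10 := congrFun (congrFun hq 1) 0
    have h11 := congrFun (congrFun hq 1) 1
    simp [Matrix.one_apply] at h01 h10 h11
    have hp : p = -1 := by linear_combination -h11
    have hp2 : p * p = 1 := by linear_combination (p - 1) * hp
    exact ⟨Or.inr hp, by linear_combination p * h10 - b1 * hp2,
      by linear_combination -p * h01 - bk * hp2⟩
  · have h01 := congrFun (congrFun hq 0) 1
    have h10 := congrFun (congrFun hq 1) 0
    have h11 := congrFun (congrFun hq 1) 1
    simp [Matrix.one_apply] at h01 h10 h11
    have hp : p = 1 := by linear_combination h11
    have hp2 : p * p = 1 := by linear_combination (p + 1) * hp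
    exact ⟨Or.inl hp, by linear_combination p * h10 - b1 * hp2,
      by linear_combination -p * h01 - bk * hp2⟩

lemma window' (n L j : ℕ) (hn : 4 ≤ n) (hL1 : 1 ≤ L) (hL : L ≤ n - 3) (w : List A)
    (hw : w = (((1:A) :: ((n:A)-2) :: (1:A) :: List.replicate (n-3) (2:A)).rotate j).drop (n - L)) :
    (∃ t, w = (1:A) :: List.replicate t (2:A)) ∨
    (∃ t, w = List.replicate t (2:A) ++ [(1:A)]) ∨
    (∃ t, w = List.replicate t (2:A)) ∨
    (∃ t, w = ((n:A)-2) :: (1:A) :: List.replicate t (2:A)) ∨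
    (w = [(n:A)-2]) ∨
    (∃ t, w = List.replicate t (2:A) ++ [(1:A), (n:A)-2]) ∨
    (∃ t u, w = List.replicate t (2:A) ++ (1:A) :: ((n:A)-2) :: (1:A) :: List.replicate u (2:A)) := by
  set a : List A := (1:A) :: ((n:A)-2) :: (1:A) :: List.replicate (n-3) (2:A) with ha
  have la : a.length = n := by simp [ha]; omega
  have hdrop : ∀ m, 3 ≤ m → a.drop m = List.replicate (n-m) (2:A) := by
    intro m hm
    have h1 : a.drop m = (a.drop 3).drop (m-3) := by rw [List.drop_drop]; congr 1; omega
    have h2 : a.drop 3 = List.replicate (n-3) (2:A) := by simp [ha]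
    rw [h1, h2, List.drop_replicate]; congr 1; omega
  have htake : ∀ m, 3 ≤ m → m ≤ n → a.take m = (1:A) :: ((n:A)-2) :: (1:A) :: List.replicate (m-3) (2:A) := by
    intro m h3 hmn
    obtain ⟨t, rfl⟩ : ∃ t, m = t + 3 := ⟨m - 3, by omega⟩
    simp [ha, List.take_replicate]
    omega
  set j' := j % n with hj'
  have hjn : j' < n := Nat.mod_lt _ (by omega)
  have hrot : a.rotate j = a.rotate j' := by
    rw [hj', ← la, List.rotate_mod]
  rw [hrot, List.rotate_eq_drop_append_take (by omega : j' ≤ a.length),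
    List.drop_append] at hw
  have hdl : (a.drop j').length = n - j' := by simp [la]
  rcases Nat.lt_or_ge j' L with hc | hc
  · -- wrap case : w = a.drop (j' + (n-L)) ++ a.take j'
    have h0 : n - L - (a.drop j').length = 0 := by omega
    rw [h0, List.drop_zero, List.drop_drop] at hw
    rw [hdrop (j' + (n-L)) (by omega)] at hw
    have hrep : n - (j' + (n - L)) = L - j' := by omega
    rw [hrep] at hw
    match j', hc with
    | 0, hc => exact Or.inr (Or.inr (Or.inl ⟨L, by simpa using hw⟩))
    | 1, hc =>
        refine Or.inr (Or.inl ⟨L - 1, ?_⟩)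
        rw [hw]; simp [ha]
    | 2, hc =>
        refine Or.inr (Or.inr (Or.inr (Or.inr (Or.inr (Or.inl ⟨L - 2, ?_⟩)))))
        rw [hw]; simp [ha]
    | (s+3), hc =>
        refine Or.inr (Or.inr (Or.inr (Or.inr (Or.inr (Or.inr ⟨L - (s+3), s, ?_⟩)))))
        rw [hw, htake (s+3) (by omega) (by omega)]
        simp
  · -- no-wrap : w = (a.drop (j'-L)).take L
    have h1 : (a.drop j').drop (n - L) = [] := by
      apply List.drop_eq_nil_of_le
      simp [la]; omega
    have h2 : n - L - (a.drop j').length = j' - L := by omega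
    rw [h1, List.nil_append, h2, List.drop_take] at hw
    have h3 : j' - (j' - L) = L := by omega
    rw [h3] at hw
    rcases Nat.lt_or_ge (j' - L) 3 with hs | hs
    · interval_cases h : (j' - L)
      · -- start = 0 : w = a.take L
        rw [List.drop_zero] at hw
        match L, hL1 with
        | 1, _ => exact Or.inl ⟨0, by rw [hw]; simp [ha]⟩
        | 2, _ => exact Or.inr (Or.inr (Or.inr (Or.inr (Or.inr (Or.inl ⟨0, by rw [hw]; simp [ha]⟩)))))
        | (t+3), _ =>
            refine Or.inr (Or.inr (Or.inr (Or.inr (Or.inr (Or.inr ⟨0, t, ?_⟩)))))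
            rw [hw, htake (t+3) (by omega) (by omega)]; simp
      · -- start = 1
        match L, hL1 with
        | 1, _ => exact Or.inr (Or.inr (Or.inr (Or.inr (Or.inl (by rw [hw]; simp [ha])))))
        | (t+2), _ =>
            refine Or.inr (Or.inr (Or.inr (Or.inl ⟨t, ?_⟩)))
            rw [hw]; simp [ha, List.take_replicate]
            congr 1; omega
      · -- start = 2
        obtain ⟨t, rfl⟩ : ∃ t, L = t + 1 := ⟨L - 1, by omega⟩
        refine Or.inl ⟨t, ?_⟩
        rw [hw]; simp [ha, List.take_replicate]
        congr 1; omega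
    · -- start ≥ 3 : all 2's
      refine Or.inr (Or.inr (Or.inl ⟨L, ?_⟩))
      rw [hw, hdrop _ hs, List.take_replicate]
      congr 1; omega

lemma cast_eq_imp' [CharZero A] {a b : ℕ} (h : ((a:ℕ):A) = ((b:ℕ):A)) : a = b :=
  Nat.cast_injective h

end Aux

theorem stmt17 {A : Type*} [CommRing A] [CharZero A] (n k : ℕ) (hn : 4 ≤ n)
    (hk3 : 3 ≤ k) (hkn : k ≤ n - 1)
    (b : List A) (hb : b.length = k) (hq : Mlist b = 1 ∨ Mlist b = -1)
    (h : ∃ c : List A, c.length = n + 2 - k ∧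
      ∃ j : ℕ,
        oplus c b =
          ((1 : A) :: ((n : A) - 2) :: (1 : A) :: List.replicate (n - 3) (2 : A)).rotate j ∨
        oplus c b =
          ((1 : A) :: ((n : A) - 2) :: (1 : A) ::
            List.replicate (n - 3) (2 : A)).reverse.rotate j) :
    b = ((k : A) - 2) :: (1 : A) :: (List.replicate (k - 3) (2 : A) ++ [(1 : A)]) ∨
    b = (1 : A) :: (List.replicate (k - 3) (2 : A) ++ [(1 : A), (k : A) - 2]) := by
  set a : List A := (1:A) :: ((n:A)-2) :: (1:A) :: List.replicate (n-3) (2:A) with ha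
  have la : a.length = n := by simp [ha]; omega
  -- decompose b
  obtain ⟨b1, tb, rfl⟩ : ∃ x t, b = x :: t := by
    cases b with
    | nil => simp at hb; omega
    | cons x t => exact ⟨x, t, rfl⟩
  have htb : tb ≠ [] := by
    intro hh; rw [hh] at hb; simp at hb; omega
  obtain ⟨w, bk, rfl⟩ : ∃ w x, tb = w ++ [x] :=
    ⟨tb.dropLast, tb.getLast htb, (List.dropLast_append_getLast htb).symm⟩
  have hwlen : w.length = k - 2 := by
    simp at hb; omega
  -- reduce h to a single rotation
  obtain ⟨c, hc, j0, hor⟩ := h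
  have harev : a.reverse = a.rotate 3 := by
    rw [List.rotate_eq_drop_append_take (by rw [la]; omega)]
    simp [ha]
  have heq : ∃ j, oplus c (b1 :: (w ++ [bk])) = a.rotate j := by
    rcases hor with h1 | h1
    · exact ⟨j0, h1⟩
    · refine ⟨3 + j0, ?_⟩
      rw [← List.rotate_rotate, ← harev]
      exact h1
  obtain ⟨j, heq⟩ := heq
  -- decompose c
  obtain ⟨c1, tc, rfl⟩ : ∃ x t, c = x :: t := by
    cases c with
    | nil => simp at hc; omega
    | cons x t => exact ⟨x, t, rfl⟩
  -- compute oplus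
  have hop : oplus (c1 :: tc) (b1 :: (w ++ [bk])) =
      ((c1 + bk) :: (tc.dropLast ++ [tc.getLastD c1 + b1])) ++ w := by
    show (c1 + (w ++ [bk]).getLastD b1) ::
        (tc.dropLast ++ ((tc.getLastD c1 + b1) :: (w ++ [bk]).dropLast)) = _
    rw [List.getLastD_concat, List.dropLast_concat]
    simp
  have hulen : ((c1 + bk) :: (tc.dropLast ++ [tc.getLastD c1 + b1])).length = n - (k-2) := by
    have : tc ≠ [] := by
      intro hh; rw [hh] at hc; simp at hc; omega
    have h1 : tc.length ≥ 1 := List.length_pos_iff.mpr this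
    simp at hc ⊢
    omega
  have hw : w = (a.rotate j).drop (n - (k-2)) := by
    rw [← heq, hop, ← hulen, List.drop_left]
  -- case analysis on the shape of the window
  obtain ⟨hp, hb1, hbk⟩ := quid_core' b1 bk w hq
  rcases window' n (k-2) j hn (by omega) (by omega) w hw with
    ⟨t, rfl⟩ | ⟨t, rfl⟩ | ⟨t, rfl⟩ | ⟨t, rfl⟩ | rfl | ⟨t, rfl⟩ | ⟨t, u, rfl⟩
  · -- good case 1 : w = 1 :: 2^t, conclusion left
    have ht : t = k - 3 := by simp at hwlen; omega
    rw [M_D1'] at hb1 hbk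
    simp at hb1 hbk
    left
    subst ht hb1 hbk
    simp
    rw [Nat.cast_sub hk3]; push_cast; ring
  · -- good case 2 : w = 2^t ++ [1], conclusion right
    have ht : t = k - 3 := by simp at hwlen; omega
    rw [M_D2'] at hb1 hbk
    simp at hb1 hbk
    right
    subst ht hb1 hbk
    simp
    rw [Nat.cast_sub hk3]; push_cast; ring
  · -- w = 2^t : impossible
    exfalso
    have ht : t = k - 2 := by simp at hwlen; omega
    rw [Mlist_replicate'] at hp
    simp at hp
    rcases hp with hp | hp
    · omega
    · have : (((t+2):ℕ):A) = ((0:ℕ):A) := by push_cast; linear_combination hp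
      have := cast_eq_imp' this; omega
  · -- w = (n-2) :: 1 :: 2^t : impossible
    exfalso
    have ht : t + 4 = k := by simp at hwlen; omega
    rw [M_D4'] at hp
    simp at hp
    rcases hp with hp | hp
    · have : ((n:ℕ):A) = (((t+4):ℕ):A) := by push_cast; linear_combination hp
      have := cast_eq_imp' this; omega
    · have : ((n:ℕ):A) = (((t+2):ℕ):A) := by push_cast; linear_combination hp
      have := cast_eq_imp' this; omega
  · -- w = [n-2] : impossible
    exfalso
    rw [M_D5'] at hp
    simp at hp
    rcases hp with hp | hp
    · have : ((n:ℕ):A) = ((3:ℕ):A) := by push_cast; linear_combination hp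
      have := cast_eq_imp' this; omega
    · have : ((n:ℕ):A) = ((1:ℕ):A) := by push_cast; linear_combination hp
      have := cast_eq_imp' this; omega
  · -- w = 2^t ++ [1, n-2] : impossible
    exfalso
    have ht : t + 4 = k := by simp at hwlen; omega
    rw [M_D6'] at hp
    simp at hp
    rcases hp with hp | hp
    · have : ((n:ℕ):A) = (((t+4):ℕ):A) := by push_cast; linear_combination hp
      have := cast_eq_imp' this; omega
    · have : ((n:ℕ):A) = (((t+2):ℕ):A) := by push_cast; linear_combination hp
      have := cast_eq_imp' this; omega
  · -- w = 2^t ++ [1, n-2, 1] ++ 2^u : impossible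
    exfalso
    have ht : t + u + 5 = k := by simp at hwlen; omega
    rw [M_D7'] at hp
    rcases hp with hp | hp
    · have : ((n:ℕ):A) = (((t+u+5):ℕ):A) := by push_cast; linear_combination hp
      have := cast_eq_imp' this; omega
    · have : ((n:ℕ):A) = (((t+u+3):ℕ):A) := by push_cast; linear_combination hp
      have := cast_eq_imp' this; omega
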